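/- arXiv:2009.01384 — 7 statements merged into one kernel-verified Lean document; each statement's English description precedes it below -/
import Mathlib

section
/- Let k be a field and α : k[T1,T2] → k a k-linear functional. Then α is recognizable (i.e., there exists an ideal of k[T1,T2] of finite codimension contained in ker α) if and only if there exist a polynomial P ∈ k[T1,T2] and one-variable polynomials Q1, Q2 ∈ k[T] with Q1(0) ≠ 0 and Q2(0) ≠ 0 such that Z_α(T1,T2) · Q1(T1) · Q2(T2) = P(T1,T2) holds in the formal power series ring k[[T1,T2]] (equivalently, Z_α = P/(Q1(T1)·Q2(T2))). -/
/-!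
The coefficient of `T^d` in `Z_α · Q₁(T₁) · Q₂(T₂)` is the value of `α` at the product of the
truncated reversals `revTrunc (d 0) Q₁ (T₁) · revTrunc (d 1) Q₂ (T₂)`, and for `Q = reverse p`
and `c ≥ deg p` one has `revTrunc c Q = T^(c - deg p) · p`.

If `α` is recognizable, the largest ideal inside `ker α` has finite codimension, so it contains
nonzero `p₁(T₁)` and `p₂(T₂)`; with `Qᵢ = reverse pᵢ` all coefficients of `Z_α · Q₁ · Q₂` outside
the box `[0, deg p₁) × [0, deg p₂)` vanish, so the product is a polynomial.

Conversely, if `Z_α · Q₁ · Q₂ = P`, then `α` vanishes on `revTrunc c Q₁ (T₁) · revTrunc e Q₂ (T₂)`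
as soon as `c` exceeds the `T₁`-degree of `P`. Since `Q₂(0) ≠ 0`, the `revTrunc e Q₂` are
triangular with respect to the monomial basis, so `α` kills `revTrunc c Q₁ (T₁) · k[T₂]`, and
multiplying by `T₁` only raises `c`: the nonzero `revTrunc c Q₁ (T₁)` lies in the largest ideal
inside `ker α`. Symmetrically for `T₂`, and then that ideal has finite codimension.
-/

open MvPolynomial

def Recognizable (k : Type*) [Field k] (α : MvPolynomial (Fin 2) k →ₗ[k] k) : Prop :=
  ∃ I : Ideal (MvPolynomial (Fin 2) k),
    (∀ x ∈ I, α x = 0) ∧ FiniteDimensional k (MvPolynomial (Fin 2) k ⧸ I)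

namespace Polynomial

open Finset

variable {R : Type*} [CommSemiring R]

/-- `X ^ c * q(1/X)` with the terms of negative degree dropped. -/
noncomputable def revTrunc (c : ℕ) : R[X] →ₗ[R] R[X] where
  toFun q := ∑ j ∈ range (c + 1), monomial j (q.coeff (c - j))
  map_add' p q := by simp only [coeff_add, map_add, sum_add_distrib]
  map_smul' r q := by simp only [coeff_smul, smul_sum, smul_monomial, RingHom.id_apply]

theorem coeff_revTrunc (c i : ℕ) (q : R[X]) :
    (revTrunc c q).coeff i = if i ≤ c then q.coeff (c - i) else 0 := by
  simp [revTrunc, coeff_monomial]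

theorem revTrunc_monomial (c a : ℕ) (r : R) :
    revTrunc c (monomial a r) = if a ≤ c then monomial (c - a) r else 0 := by
  ext i
  simp only [coeff_revTrunc, coeff_monomial, apply_ite (coeff · i), coeff_zero]
  split_ifs <;> first | rfl | omega

theorem X_pow_mul_revTrunc {q : R[X]} {c : ℕ} (hq : q.natDegree ≤ c) (a : ℕ) :
    X ^ a * revTrunc c q = revTrunc (c + a) q := by
  ext i
  rw [coeff_X_pow_mul', coeff_revTrunc, coeff_revTrunc]
  split_ifs with ha hi hi' hi'
  · rw [Nat.sub_sub_right _ ha]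
  all_goals first | rfl | omega | exact (coeff_eq_zero_of_natDegree_lt (by omega)).symm

theorem revTrunc_reverse {p : R[X]} {c : ℕ} (hp : p.natDegree ≤ c) :
    revTrunc c p.reverse = X ^ (c - p.natDegree) * p := by
  have h : revTrunc p.natDegree p.reverse = p := by
    ext i
    rw [coeff_revTrunc, coeff_reverse, revAt_le (Nat.sub_le _ _)]
    split_ifs with hi
    · rw [Nat.sub_sub_self hi]
    · exact (coeff_eq_zero_of_natDegree_lt (by omega)).symm
  calc revTrunc c p.reverse = revTrunc (p.natDegree + (c - p.natDegree)) p.reverse := by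
        rw [Nat.add_sub_cancel' hp]
    _ = X ^ (c - p.natDegree) * p := by rw [← X_pow_mul_revTrunc p.reverse_natDegree_le, h]

theorem revTrunc_ne_zero {q : R[X]} (hq : q.coeff 0 ≠ 0) (c : ℕ) : revTrunc c q ≠ 0 := by
  refine ne_of_apply_ne (coeff · c) ?_
  simpa [coeff_revTrunc] using hq

theorem linearMap_eq_zero_of_map_revTrunc {M : Type*} [AddCommMonoid M] [Module R M]
    {q : R[X]} (hq : IsUnit (q.coeff 0)) (β : R[X] →ₗ[R] M) (h : ∀ c, β (revTrunc c q) = 0) :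
    β = 0 := by
  have hX : ∀ n, β (X ^ n) = 0 := by
    intro n
    induction n using Nat.strong_induction_on with
    | _ n ih =>
      have hsplit : revTrunc n q =
          ∑ j ∈ range n, monomial j (q.coeff (n - j)) + q.coeff 0 • X ^ n := by
        rw [revTrunc, LinearMap.coe_mk, AddHom.coe_mk, sum_range_succ, Nat.sub_self,
          smul_X_eq_monomial]
      have hlow : β (∑ j ∈ range n, monomial j (q.coeff (n - j))) = 0 := by
        simp only [map_sum, ← smul_X_eq_monomial, map_smul]
        exact sum_eq_zero fun j hj => by rw [ih j (mem_range.1 hj), smul_zero]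
      have := h n
      rwa [hsplit, map_add, hlow, zero_add, map_smul, hq.smul_eq_zero] at this
  ext n
  simpa [X_pow_eq_monomial] using hX n

end Polynomial

namespace LinearMap

variable {R A M : Type*} [CommSemiring R] [CommSemiring A] [Algebra R A] [AddCommMonoid M]
  [Module R M]

def kerIdeal (α : A →ₗ[R] M) : Ideal A where
  carrier := {h | ∀ g, α (g * h) = 0}
  add_mem' ha hb g := by rw [mul_add, map_add, ha g, hb g, add_zero]
  zero_mem' g := by rw [mul_zero, map_zero]
  smul_mem' c h hh g := by rw [smul_eq_mul, ← mul_assoc]; exact hh (g * c)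

theorem le_kerIdeal_iff {α : A →ₗ[R] M} {I : Ideal A} : I ≤ α.kerIdeal ↔ ∀ x ∈ I, α x = 0 :=
  ⟨fun hI x hx => by simpa using hI hx 1, fun hI _ hx g => hI _ (I.mul_mem_left g hx)⟩

end LinearMap

namespace MvPolynomial

variable {σ R : Type*} [CommSemiring R]

theorem smul_monomial_one (r : R) (d : σ →₀ ℕ) :
    r • monomial d 1 = monomial d r := by
  rw [smul_monomial, smul_eq_mul, mul_one]

theorem mem_kerIdeal_of_forall_monomial {M : Type*} [AddCommMonoid M] [Module R M] {α : MvPolynomial σ R →ₗ[R] M} {h : MvPolynomial σ R}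
    (H : ∀ d, α (monomial d 1 * h) = 0) : h ∈ α.kerIdeal := by
  intro g
  induction g using MvPolynomial.induction_on' with
  | monomial d r =>
    rw [← smul_monomial_one, smul_mul_assoc, map_smul, H, smul_zero]
  | add p q hp hq => rw [add_mul, map_add, hp, hq, add_zero]

theorem aeval_X_polynomial_monomial (i : σ) (n : ℕ) (r : R) :
    Polynomial.aeval (X i : MvPolynomial σ R) (Polynomial.monomial n r) =
      monomial (Finsupp.single i n) r := by
  rw [Polynomial.aeval_monomial, algebraMap_eq, C_mul_X_pow_eq_monomial]

theorem monomial_one_eq_X_zero_pow_mul_X_one_pow (d : Fin 2 →₀ ℕ) :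
    monomial d (1 : R) = X 0 ^ d 0 * X 1 ^ d 1 := by
  rw [monomial_eq, C_1, one_mul, Finsupp.prod_fintype _ _ (fun _ => pow_zero _), Fin.prod_univ_two]

theorem finiteDimensional_quotient_iff {k : Type*} [Field k] [Finite σ]
    (I : Ideal (MvPolynomial σ k)) :
    FiniteDimensional k (MvPolynomial σ k ⧸ I) ↔
      ∀ i, ∃ p : Polynomial k, p ≠ 0 ∧ Polynomial.aeval (X i) p ∈ I := by
  have aeval_mem_iff (i : σ) (p : Polynomial k) :
      Polynomial.aeval (X i) p ∈ I ↔ Polynomial.aeval (Ideal.Quotient.mkₐ k I (X i)) p = 0 := by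
    rw [Polynomial.aeval_algHom_apply, Ideal.Quotient.mkₐ_eq_mk, Ideal.Quotient.eq_zero_iff_mem]
  simp only [aeval_mem_iff]
  constructor
  · intro _ i
    obtain ⟨p, hp, hp0⟩ := IsIntegral.of_finite k (Ideal.Quotient.mkₐ k I (X i))
    exact ⟨p, hp.ne_zero, hp0⟩
  · intro h
    have hint : ∀ x ∈ Set.range fun i => Ideal.Quotient.mkₐ k I (X i), IsIntegral k x := by
      rintro _ ⟨i, rfl⟩
      exact IsAlgebraic.isIntegral (h i)
    have hadj : Algebra.adjoin k (Set.range fun i => Ideal.Quotient.mkₐ k I (X i)) = ⊤ := by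
      rw [Set.range_comp', Algebra.adjoin_image, adjoin_range_X, Algebra.map_top,
        (AlgHom.range_eq_top _).mpr (Ideal.Quotient.mkₐ_surjective k I)]
    have := Algebra.finite_adjoin_of_finite_of_isIntegral (Set.finite_range _) hint
    rw [hadj] at this
    exact Module.Finite.equiv Subalgebra.topEquiv.toLinearEquiv

end MvPolynomial

theorem MvPowerSeries.exists_coe_eq_of_coeff_eq_zero {σ R : Type*} [CommSemiring R]
    {φ : MvPowerSeries σ R} (n : σ →₀ ℕ) (h : ∀ d, ¬d ≤ n → coeff d φ = 0) :
    ∃ P : MvPolynomial σ R, (P : MvPowerSeries σ R) = φ := by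
  classical
  refine ⟨trunc' R n φ, ext fun d => ?_⟩
  rw [MvPolynomial.coeff_coe, coeff_trunc']
  split_ifs with hd
  · rfl
  · exact (h d hd).symm

theorem recognizable_iff_finiteDimensional_quotient_kerIdeal {k : Type*} [Field k]
    (α : MvPolynomial (Fin 2) k →ₗ[k] k) :
    Recognizable k α ↔ FiniteDimensional k (MvPolynomial (Fin 2) k ⧸ α.kerIdeal) := by
  refine ⟨fun ⟨I, hIα, _⟩ => ?_, fun h => ⟨α.kerIdeal, LinearMap.le_kerIdeal_iff.1 le_rfl, h⟩⟩
  have hI := LinearMap.le_kerIdeal_iff.2 hIα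
  exact Module.Finite.of_surjective (Ideal.Quotient.factorₐ k hI).toLinearMap
    (Ideal.Quotient.factor_surjective hI)

section TwoVariables

open Polynomial (revTrunc)

variable {R : Type*} [CommSemiring R] {α : MvPolynomial (Fin 2) R →ₗ[R] R}
  {Z : MvPowerSeries (Fin 2) R}

theorem coeff_mul_aeval_mul_aeval
    (hZ : ∀ d : Fin 2 →₀ ℕ, MvPowerSeries.coeff d Z = α (monomial d 1))
    (A B : Polynomial R) (d : Fin 2 →₀ ℕ) :
    MvPowerSeries.coeff d
        (Z * ((Polynomial.aeval (X 0 : MvPolynomial (Fin 2) R) A : MvPolynomial (Fin 2) R) :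
              MvPowerSeries (Fin 2) R)
          * ((Polynomial.aeval (X 1 : MvPolynomial (Fin 2) R) B : MvPolynomial (Fin 2) R) :
              MvPowerSeries (Fin 2) R)) =
      α (Polynomial.aeval (X 0) (revTrunc (d 0) A) *
        Polynomial.aeval (X 1) (revTrunc (d 1) B)) := by
  induction A using Polynomial.induction_on' with
  | add p q hp hq => simp only [map_add, coe_add, mul_add, add_mul, hp, hq]
  | monomial a r =>
  induction B using Polynomial.induction_on' with
  | add p q hp hq => simp only [map_add, coe_add, mul_add, hp, hq]
  | monomial b s =>
  have hle : Finsupp.single 0 a + Finsupp.single 1 b ≤ d ↔ a ≤ d 0 ∧ b ≤ d 1 := by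
    simp [Finsupp.le_def, Fin.forall_fin_two]
  have hsub : d - (Finsupp.single 0 a + Finsupp.single 1 b) =
      Finsupp.single 0 (d 0 - a) + Finsupp.single 1 (d 1 - b) := by
    ext i; fin_cases i <;> simp
  simp only [aeval_X_polynomial_monomial, coe_monomial, mul_assoc,
    MvPowerSeries.monomial_mul_monomial, MvPowerSeries.coeff_mul_monomial,
    Polynomial.revTrunc_monomial]
  by_cases had : a ≤ d 0 ∧ b ≤ d 1
  · rw [if_pos (hle.2 had), if_pos had.1, if_pos had.2, hZ, hsub, aeval_X_polynomial_monomial,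
      aeval_X_polynomial_monomial, monomial_mul, ← smul_monomial_one (r * s), map_smul,
      smul_eq_mul, mul_comm]
  · rw [if_neg (mt hle.1 had)]
    rcases not_and_or.1 had with h | h <;> simp [h]

theorem coeff_mul_aeval_reverse_mul_aeval_reverse_eq_zero
    (hZ : ∀ d : Fin 2 →₀ ℕ, MvPowerSeries.coeff d Z = α (monomial d 1)) {p q : Polynomial R}
    (hp : Polynomial.aeval (X 0) p ∈ α.kerIdeal) (hq : Polynomial.aeval (X 1) q ∈ α.kerIdeal)
    {d : Fin 2 →₀ ℕ} (hd : p.natDegree ≤ d 0 ∨ q.natDegree ≤ d 1) :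
    MvPowerSeries.coeff d
        (Z * ((Polynomial.aeval (X 0 : MvPolynomial (Fin 2) R) p.reverse :
              MvPolynomial (Fin 2) R) : MvPowerSeries (Fin 2) R)
          * ((Polynomial.aeval (X 1 : MvPolynomial (Fin 2) R) q.reverse :
              MvPolynomial (Fin 2) R) : MvPowerSeries (Fin 2) R)) = 0 := by
  rw [coeff_mul_aeval_mul_aeval hZ]
  rcases hd with hd | hd
  · rw [Polynomial.revTrunc_reverse hd, map_mul (Polynomial.aeval _), mul_right_comm]
    exact hp _
  · rw [Polynomial.revTrunc_reverse hd, map_mul (Polynomial.aeval _), ← mul_assoc]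
    exact hq _

theorem exists_mul_aeval_mul_aeval_eq_coe_of_mem_kerIdeal
    (hZ : ∀ d : Fin 2 →₀ ℕ, MvPowerSeries.coeff d Z = α (monomial d 1)) {p q : Polynomial R}
    (hp0 : p ≠ 0) (hq0 : q ≠ 0)
    (hp : Polynomial.aeval (X 0) p ∈ α.kerIdeal) (hq : Polynomial.aeval (X 1) q ∈ α.kerIdeal) :
    ∃ (P : MvPolynomial (Fin 2) R) (Q1 Q2 : Polynomial R),
        Q1.eval 0 ≠ 0 ∧ Q2.eval 0 ≠ 0 ∧
        Z * ((Polynomial.aeval (X 0 : MvPolynomial (Fin 2) R) Q1 : MvPolynomial (Fin 2) R) :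
              MvPowerSeries (Fin 2) R)
          * ((Polynomial.aeval (X 1 : MvPolynomial (Fin 2) R) Q2 : MvPolynomial (Fin 2) R) :
              MvPowerSeries (Fin 2) R)
          = (P : MvPowerSeries (Fin 2) R) := by
  obtain ⟨P, hP⟩ := MvPowerSeries.exists_coe_eq_of_coeff_eq_zero
    (Finsupp.single (0 : Fin 2) p.natDegree + Finsupp.single 1 q.natDegree) fun d hd => by
      refine coeff_mul_aeval_reverse_mul_aeval_reverse_eq_zero (d := d) hZ hp hq ?_
      simp only [Finsupp.le_def, Fin.forall_fin_two, Finsupp.coe_add, Pi.add_apply,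
        Finsupp.single_eq_same, Finsupp.single_eq_of_ne, ne_eq, zero_ne_one, one_ne_zero,
        not_false_eq_true, add_zero, zero_add, not_and, not_le] at hd
      omega
  refine ⟨P, p.reverse, q.reverse, ?_, ?_, hP.symm⟩ <;>
    simpa [← Polynomial.coeff_zero_eq_eval_zero]

theorem map_aeval_revTrunc_mul_aeval_revTrunc_eq_coeff
    (hZ : ∀ d : Fin 2 →₀ ℕ, MvPowerSeries.coeff d Z = α (monomial d 1))
    {P : MvPolynomial (Fin 2) R} {Q1 Q2 : Polynomial R}
    (hPQ : Z * ((Polynomial.aeval (X 0 : MvPolynomial (Fin 2) R) Q1 : MvPolynomial (Fin 2) R) :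
              MvPowerSeries (Fin 2) R)
          * ((Polynomial.aeval (X 1 : MvPolynomial (Fin 2) R) Q2 : MvPolynomial (Fin 2) R) :
              MvPowerSeries (Fin 2) R)
          = (P : MvPowerSeries (Fin 2) R)) (c e : ℕ) :
    α (Polynomial.aeval (X 0) (revTrunc c Q1) * Polynomial.aeval (X 1) (revTrunc e Q2)) =
      P.coeff (Finsupp.single 0 c + Finsupp.single 1 e) := by
  rw [← coeff_coe, ← hPQ, coeff_mul_aeval_mul_aeval hZ]
  simp

theorem aeval_X_zero_revTrunc_mem_kerIdeal {Q : Polynomial R} {N : ℕ} (hQ : Q.natDegree ≤ N)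
    (h : ∀ c, N ≤ c → ∀ v : Polynomial R,
      α (Polynomial.aeval (X 0) (revTrunc c Q) * Polynomial.aeval (X 1) v) = 0) :
    Polynomial.aeval (X 0) (revTrunc N Q) ∈ α.kerIdeal := by
  refine mem_kerIdeal_of_forall_monomial fun d => ?_
  have hmul : monomial d (1 : R) * Polynomial.aeval (X 0) (revTrunc N Q) =
      Polynomial.aeval (X 0) (revTrunc (N + d 0) Q) *
        Polynomial.aeval (X 1) ((Polynomial.X : Polynomial R) ^ d 1) := by
    rw [← Polynomial.X_pow_mul_revTrunc hQ, monomial_one_eq_X_zero_pow_mul_X_one_pow]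
    simp only [map_mul, map_pow, Polynomial.aeval_X]
    ring
  rw [hmul]
  exact h _ (Nat.le_add_right _ _) _

theorem aeval_X_one_revTrunc_mem_kerIdeal {Q : Polynomial R} {N : ℕ} (hQ : Q.natDegree ≤ N)
    (h : ∀ e, N ≤ e → ∀ u : Polynomial R,
      α (Polynomial.aeval (X 0) u * Polynomial.aeval (X 1) (revTrunc e Q)) = 0) :
    Polynomial.aeval (X 1) (revTrunc N Q) ∈ α.kerIdeal := by
  refine mem_kerIdeal_of_forall_monomial fun d => ?_
  have hmul : monomial d (1 : R) * Polynomial.aeval (X 1) (revTrunc N Q) =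
      Polynomial.aeval (X 0) ((Polynomial.X : Polynomial R) ^ d 0) *
        Polynomial.aeval (X 1) (revTrunc (N + d 1) Q) := by
    rw [← Polynomial.X_pow_mul_revTrunc hQ, monomial_one_eq_X_zero_pow_mul_X_one_pow]
    simp only [map_mul, map_pow, Polynomial.aeval_X]
    ring
  rw [hmul]
  exact h _ (Nat.le_add_right _ _) _

end TwoVariables

open Polynomial (revTrunc) in
theorem exists_aeval_mem_kerIdeal_of_mul_aeval_mul_aeval_eq_coe {k : Type*} [Field k]
    {α : MvPolynomial (Fin 2) k →ₗ[k] k} {Z : MvPowerSeries (Fin 2) k}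
    (hZ : ∀ d : Fin 2 →₀ ℕ, MvPowerSeries.coeff d Z = α (monomial d 1))
    {P : MvPolynomial (Fin 2) k} {Q1 Q2 : Polynomial k} (hQ1 : Q1.coeff 0 ≠ 0)
    (hQ2 : Q2.coeff 0 ≠ 0)
    (hPQ : Z * ((Polynomial.aeval (X 0 : MvPolynomial (Fin 2) k) Q1 : MvPolynomial (Fin 2) k) :
              MvPowerSeries (Fin 2) k)
          * ((Polynomial.aeval (X 1 : MvPolynomial (Fin 2) k) Q2 : MvPolynomial (Fin 2) k) :
              MvPowerSeries (Fin 2) k)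
          = (P : MvPowerSeries (Fin 2) k)) :
    ∀ i, ∃ p : Polynomial k, p ≠ 0 ∧ Polynomial.aeval (X i) p ∈ α.kerIdeal := by
  have hvanish (c e : ℕ) (h : P.degreeOf 0 < c ∨ P.degreeOf 1 < e) :
      α (Polynomial.aeval (X 0) (revTrunc c Q1) * Polynomial.aeval (X 1) (revTrunc e Q2)) = 0 := by
    rw [map_aeval_revTrunc_mul_aeval_revTrunc_eq_coeff hZ hPQ, ← notMem_support_iff]
    rcases h with h | h
    · exact notMem_support_of_degreeOf_lt 0 (by simpa using h)
    · exact notMem_support_of_degreeOf_lt 1 (by simpa using h)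
  rw [Fin.forall_fin_two]
  constructor
  · refine ⟨_, Polynomial.revTrunc_ne_zero hQ1 (P.degreeOf 0 + 1 + Q1.natDegree),
      aeval_X_zero_revTrunc_mem_kerIdeal (by omega) fun c hc v => ?_⟩
    have := Polynomial.linearMap_eq_zero_of_map_revTrunc (isUnit_iff_ne_zero.2 hQ2)
      (α ∘ₗ LinearMap.mulLeft k (Polynomial.aeval (X 0) (revTrunc c Q1)) ∘ₗ
        (Polynomial.aeval (X 1)).toLinearMap)
      fun e => hvanish c e (.inl (by omega))
    exact LinearMap.congr_fun this v
  · refine ⟨_, Polynomial.revTrunc_ne_zero hQ2 (P.degreeOf 1 + 1 + Q2.natDegree),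
      aeval_X_one_revTrunc_mem_kerIdeal (by omega) fun e he u => ?_⟩
    have := Polynomial.linearMap_eq_zero_of_map_revTrunc (isUnit_iff_ne_zero.2 hQ1)
      (α ∘ₗ LinearMap.mulRight k (Polynomial.aeval (X 1) (revTrunc e Q2)) ∘ₗ
        (Polynomial.aeval (X 0)).toLinearMap)
      fun c => hvanish c e (.inr (by omega))
    exact LinearMap.congr_fun this u

/-- A linear functional `α : k[T₁,T₂] → k` is recognizable iff its generating power series
`Z_α` is of the form `P(T₁,T₂) / (Q₁(T₁) Q₂(T₂))` with `Q₁(0) ≠ 0`, `Q₂(0) ≠ 0`. -/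
theorem recognizable_iff_rational (k : Type*) [Field k]
    (α : MvPolynomial (Fin 2) k →ₗ[k] k)
    (Z : MvPowerSeries (Fin 2) k)
    (hZ : ∀ d : Fin 2 →₀ ℕ, MvPowerSeries.coeff d Z = α (monomial d 1)) :
    Recognizable k α ↔
      ∃ (P : MvPolynomial (Fin 2) k) (Q1 Q2 : Polynomial k),
        Q1.eval 0 ≠ 0 ∧ Q2.eval 0 ≠ 0 ∧
        Z * ((Polynomial.aeval (X 0 : MvPolynomial (Fin 2) k) Q1 : MvPolynomial (Fin 2) k) :
              MvPowerSeries (Fin 2) k)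
          * ((Polynomial.aeval (X 1 : MvPolynomial (Fin 2) k) Q2 : MvPolynomial (Fin 2) k) :
              MvPowerSeries (Fin 2) k)
          = (P : MvPowerSeries (Fin 2) k) := by
  rw [recognizable_iff_finiteDimensional_quotient_kerIdeal,
    MvPolynomial.finiteDimensional_quotient_iff]
  constructor
  · intro h
    obtain ⟨p, hp0, hp⟩ := h 0
    obtain ⟨q, hq0, hq⟩ := h 1
    exact exists_mul_aeval_mul_aeval_eq_coe_of_mem_kerIdeal hZ hp0 hq0 hp hq
  · rintro ⟨P, Q1, Q2, hQ1, hQ2, hPQ⟩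
    rw [← Polynomial.coeff_zero_eq_eval_zero] at hQ1 hQ2
    exact exists_aeval_mem_kerIdeal_of_mul_aeval_mul_aeval_eq_coe hZ hQ1 hQ2 hPQ
end

section
/- Let k be a field, α : k[T1,T2] → k a linear functional, and U1, U2 ∈ k[T] nonzero one-variable polynomials of degrees r and r' respectively, such that α(U1(T1)·f) = 0 and α(U2(T2)·f) = 0 for every f ∈ k[T1,T2]. Let Û1(T) := T^r·U1(1/T) and Û2(T) := T^{r'}·U2(1/T) be the reversed polynomials (the j-th coefficient of Û1 is the (r−j)-th coefficient of U1, and similarly for Û2). Then every coefficient w_{i,j} of the power series Z_α(T1,T2)·Û1(T1)·Û2(T2) with i ≥ r or j ≥ r' vanishes; in particular this product is a polynomial whose degree in T1 is less than r and whose degree in T2 is less than r'. -/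
/-!
Expanding `Z_α · Û(T_i)` coefficientwise, the reversal of `U` turns the coefficient at `d`
with `d_i ≥ deg U` into `α(U(T_i) · T^(d - deg U · e_i))`, which vanishes by hypothesis.
Multiplying by a polynomial in the other variable only shifts exponents in that variable, so the
vanishing survives; the surviving coefficients lie in a box, so the product equals its
truncation to that box.
-/

open MvPolynomial

section
variable {σ R : Type*} [CommSemiring R]

theorem MvPolynomial.coeff_aeval_X_eq_zero {i j : σ} (hij : i ≠ j) (V : Polynomial R)
    {c : σ →₀ ℕ} (hc : c i ≠ 0) : coeff c (Polynomial.aeval (X j : MvPolynomial σ R) V) = 0 := by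
  classical
  induction V using Polynomial.induction_on' with
  | add p q hp hq => rw [map_add, coeff_add, hp, hq, add_zero]
  | monomial n a =>
    rw [Polynomial.aeval_monomial, algebraMap_eq, C_mul_X_pow_eq_monomial, coeff_monomial,
      if_neg]
    rintro rfl
    exact hc (Finsupp.single_eq_of_ne hij)

theorem MvPolynomial.coe_aeval_X (i : σ) (p : Polynomial R) :
    ((Polynomial.aeval (X i : MvPolynomial σ R) p : MvPolynomial σ R) : MvPowerSeries σ R) =
      Polynomial.aeval (MvPowerSeries.X i) p := by
  simpa [coeToMvPowerSeries.algHom_apply] using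
    (Polynomial.aeval_algHom_apply (coeToMvPowerSeries.algHom (σ := σ) R) (X i) p).symm

theorem MvPowerSeries.coe_trunc'_of_coeff_eq_zero [DecidableEq σ] {S : MvPowerSeries σ R}
    {n : σ →₀ ℕ} (h : ∀ d, ¬d ≤ n → coeff d S = 0) : (trunc' R n S : MvPowerSeries σ R) = S := by
  ext d
  rw [coeff_coe, coeff_trunc']
  split_ifs with hd
  · rfl
  · exact (h d hd).symm

theorem MvPowerSeries.coeff_mul_eq_zero_of_le {Y q : MvPowerSeries σ R} {i : σ} {r : ℕ}
    (hY : ∀ e, r ≤ e i → coeff e Y = 0) (hq : ∀ c, c i ≠ 0 → coeff c q = 0) {d : σ →₀ ℕ}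
    (hd : r ≤ d i) : coeff d (Y * q) = 0 := by
  classical
  rw [coeff_mul]
  refine Finset.sum_eq_zero fun p hp => ?_
  by_cases hp2 : p.2 i = 0
  · have hp1 : p.1 i = d i := by
      rw [← Finset.HasAntidiagonal.mem_antidiagonal.mp hp, Finsupp.add_apply, hp2, add_zero]
    rw [hY p.1 (hp1 ▸ hd), zero_mul]
  · rw [hq p.2 hp2, mul_zero]

variable (α : MvPolynomial σ R →ₗ[R] R) {Z : MvPowerSeries σ R}

theorem coeff_mul_aeval_X_reflect (hZ : ∀ d, MvPowerSeries.coeff d Z = α (monomial d 1))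
    (i : σ) {U : Polynomial R} {N : ℕ} (hUN : U.natDegree ≤ N) {d : σ →₀ ℕ} (hNd : N ≤ d i) :
    MvPowerSeries.coeff d (Z * Polynomial.aeval (MvPowerSeries.X i) (U.reflect N)) =
      α (Polynomial.aeval (X i) U * monomial (d - Finsupp.single i N) 1) := by
  classical
  set e := d - Finsupp.single i N
  have hcoeff : ∀ m ≤ N, MvPowerSeries.coeff d (Z * MvPowerSeries.X i ^ m) =
      α (monomial (d - Finsupp.single i m) 1) := fun m hm => by
    rw [MvPowerSeries.X_pow_eq, MvPowerSeries.coeff_mul_monomial,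
      if_pos (Finsupp.single_le_iff.mpr (hm.trans hNd)), hZ, mul_one]
  have hexp : ∀ l ≤ N, d - Finsupp.single i (N - l) = Finsupp.single i l + e := fun l hl => by
    ext s
    rcases eq_or_ne s i with rfl | hs
    · simp only [e, Finsupp.tsub_apply, Finsupp.add_apply, Finsupp.single_eq_same]
      omega
    · simp [e, Finsupp.single_eq_of_ne hs]
  have hdeg : (U.reflect N).natDegree < N + 1 :=
    Nat.lt_succ_of_le (Polynomial.natDegree_reflect_le.trans (max_le le_rfl hUN))
  calc MvPowerSeries.coeff d (Z * Polynomial.aeval (MvPowerSeries.X i) (U.reflect N))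
      = ∑ m ∈ Finset.range (N + 1),
          (U.reflect N).coeff m * MvPowerSeries.coeff d (Z * MvPowerSeries.X i ^ m) := by
        simp only [Polynomial.aeval_eq_sum_range' hdeg, Finset.mul_sum, map_sum, mul_smul_comm,
          MvPowerSeries.coeff_smul]
    _ = ∑ l ∈ Finset.range (N + 1), U.coeff l * α (monomial (Finsupp.single i l + e) 1) := by
        rw [← Finset.sum_range_reflect]
        refine Finset.sum_congr rfl fun l hl => ?_
        have hl : l ≤ N := Nat.lt_succ_iff.mp (Finset.mem_range.mp hl)
        rw [Nat.add_sub_cancel, Polynomial.coeff_reflect, Polynomial.revAt_le (N.sub_le l),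
          Nat.sub_sub_self hl, hcoeff _ (N.sub_le l), hexp l hl]
    _ = α (Polynomial.aeval (X i) U * monomial e 1) := by
        simp only [Polynomial.aeval_eq_sum_range' (Nat.lt_succ_of_le hUN), Finset.sum_mul,
          map_sum, smul_mul_assoc, X_pow_eq_monomial, monomial_mul, one_mul, map_smul,
          smul_eq_mul]

theorem coeff_mul_aeval_X_reverse_mul_aeval_X_eq_zero
    (hZ : ∀ d, MvPowerSeries.coeff d Z = α (monomial d 1)) {i j : σ} (hij : i ≠ j)
    {U : Polynomial R} (hann : ∀ f, α (Polynomial.aeval (X i) U * f) = 0) (V : Polynomial R)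
    {d : σ →₀ ℕ} (hd : U.natDegree ≤ d i) :
    MvPowerSeries.coeff d (Z * ((Polynomial.aeval (X i) U.reverse : MvPolynomial σ R) :
      MvPowerSeries σ R) * ((Polynomial.aeval (X j) V : MvPolynomial σ R) :
      MvPowerSeries σ R)) = 0 := by
  refine MvPowerSeries.coeff_mul_eq_zero_of_le (fun e he => ?_) (fun c hc => ?_) hd
  · rw [coe_aeval_X]
    exact (coeff_mul_aeval_X_reflect α hZ i le_rfl he).trans (hann _)
  · rw [coeff_coe]
    exact coeff_aeval_X_eq_zero hij V hc

end

theorem coeff_vanish_of_annihilating_general (k : Type*) [Field k]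
    (α : MvPolynomial (Fin 2) k →ₗ[k] k)
    (Z : MvPowerSeries (Fin 2) k)
    (hZ : ∀ d : Fin 2 →₀ ℕ, MvPowerSeries.coeff d Z = α (monomial d 1))
    (U1 U2 : Polynomial k) (r r' : ℕ)
    (hr : U1.natDegree = r) (hr' : U2.natDegree = r')
    (hann1 : ∀ f : MvPolynomial (Fin 2) k,
      α (Polynomial.aeval (X 0 : MvPolynomial (Fin 2) k) U1 * f) = 0)
    (hann2 : ∀ f : MvPolynomial (Fin 2) k,
      α (Polynomial.aeval (X 1 : MvPolynomial (Fin 2) k) U2 * f) = 0) :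
    (∀ d : Fin 2 →₀ ℕ, (r ≤ d 0 ∨ r' ≤ d 1) →
      MvPowerSeries.coeff d
        (Z * ((Polynomial.aeval (X 0 : MvPolynomial (Fin 2) k) U1.reverse :
                MvPolynomial (Fin 2) k) : MvPowerSeries (Fin 2) k)
           * ((Polynomial.aeval (X 1 : MvPolynomial (Fin 2) k) U2.reverse :
                MvPolynomial (Fin 2) k) : MvPowerSeries (Fin 2) k)) = 0) ∧
    ∃ P : MvPolynomial (Fin 2) k,
      (P : MvPowerSeries (Fin 2) k) =
        Z * ((Polynomial.aeval (X 0 : MvPolynomial (Fin 2) k) U1.reverse :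
                MvPolynomial (Fin 2) k) : MvPowerSeries (Fin 2) k)
          * ((Polynomial.aeval (X 1 : MvPolynomial (Fin 2) k) U2.reverse :
                MvPolynomial (Fin 2) k) : MvPowerSeries (Fin 2) k) ∧
      ∀ d ∈ P.support, d 0 < r ∧ d 1 < r' := by
  subst hr hr'
  have hvanish : ∀ d : Fin 2 →₀ ℕ, (U1.natDegree ≤ d 0 ∨ U2.natDegree ≤ d 1) →
      MvPowerSeries.coeff d (Z * ((Polynomial.aeval (X 0) U1.reverse : MvPolynomial (Fin 2) k) :
        MvPowerSeries (Fin 2) k) * ((Polynomial.aeval (X 1) U2.reverse :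
        MvPolynomial (Fin 2) k) : MvPowerSeries (Fin 2) k)) = 0 := by
    rintro d (hd | hd)
    · exact coeff_mul_aeval_X_reverse_mul_aeval_X_eq_zero α hZ zero_ne_one hann1 _ hd
    · rw [mul_right_comm]
      exact coeff_mul_aeval_X_reverse_mul_aeval_X_eq_zero α hZ one_ne_zero hann2 _ hd
  set n : Fin 2 →₀ ℕ := Finsupp.single 0 U1.natDegree + Finsupp.single 1 U2.natDegree
  have hbox : ∀ d, d ≤ n ↔ d 0 ≤ U1.natDegree ∧ d 1 ≤ U2.natDegree := fun d => by
    simp [n, Finsupp.le_def, Fin.forall_fin_two]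
  refine ⟨hvanish, MvPowerSeries.trunc' k n _,
    MvPowerSeries.coe_trunc'_of_coeff_eq_zero fun d hd => hvanish d ?_, fun d hd => ?_⟩
  · rw [hbox] at hd
    omega
  · rw [mem_support_iff, MvPowerSeries.coeff_trunc', ite_ne_right_iff] at hd
    by_contra hlt
    exact hd.2 (hvanish d (by omega))

/-- If `α` annihilates all multiples of `U₁(T₁)` and of `U₂(T₂)`, where `U₁, U₂` are nonzero
one-variable polynomials of degrees `r, r'`, then in the product
`Z_α(T₁,T₂)·Û₁(T₁)·Û₂(T₂)` (with `Û` the reversed polynomial, whose `j`-th coefficient is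
the `(r-j)`-th coefficient of `U`) every coefficient `w_{i,j}` with `i ≥ r` or `j ≥ r'`
vanishes; in particular the product is a polynomial of degree `< r` in `T₁`
and `< r'` in `T₂`. -/
theorem coeff_vanish_of_annihilating (k : Type*) [Field k]
    (α : MvPolynomial (Fin 2) k →ₗ[k] k)
    (Z : MvPowerSeries (Fin 2) k)
    (hZ : ∀ d : Fin 2 →₀ ℕ, MvPowerSeries.coeff d Z = α (monomial d 1))
    (U1 U2 : Polynomial k) (r r' : ℕ)
    (hU1 : U1 ≠ 0) (hU2 : U2 ≠ 0)
    (hr : U1.natDegree = r) (hr' : U2.natDegree = r')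
    (hann1 : ∀ f : MvPolynomial (Fin 2) k,
      α (Polynomial.aeval (X 0 : MvPolynomial (Fin 2) k) U1 * f) = 0)
    (hann2 : ∀ f : MvPolynomial (Fin 2) k,
      α (Polynomial.aeval (X 1 : MvPolynomial (Fin 2) k) U2 * f) = 0) :
    (∀ d : Fin 2 →₀ ℕ, (r ≤ d 0 ∨ r' ≤ d 1) →
      MvPowerSeries.coeff d
        (Z * ((Polynomial.aeval (X 0 : MvPolynomial (Fin 2) k) U1.reverse :
                MvPolynomial (Fin 2) k) : MvPowerSeries (Fin 2) k)
           * ((Polynomial.aeval (X 1 : MvPolynomial (Fin 2) k) U2.reverse :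
                MvPolynomial (Fin 2) k) : MvPowerSeries (Fin 2) k)) = 0) ∧
    ∃ P : MvPolynomial (Fin 2) k,
      (P : MvPowerSeries (Fin 2) k) =
        Z * ((Polynomial.aeval (X 0 : MvPolynomial (Fin 2) k) U1.reverse :
                MvPolynomial (Fin 2) k) : MvPowerSeries (Fin 2) k)
          * ((Polynomial.aeval (X 1 : MvPolynomial (Fin 2) k) U2.reverse :
                MvPolynomial (Fin 2) k) : MvPowerSeries (Fin 2) k) ∧
      ∀ d ∈ P.support, d 0 < r ∧ d 1 < r' :=
  coeff_vanish_of_annihilating_general k α Z hZ U1 U2 r r' hr hr' hann1 hann2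
end

section
/- Let k be a field and α : k[T1,T2] → k a recognizable linear functional. Then the syntactic ideal I_α has finite codimension, so A_α := k[T1,T2]/I_α is a finite-dimensional commutative k-algebra; the functional α descends to a well-defined linear functional ᾱ on A_α, and the symmetric bilinear form (x̄, ȳ) ↦ ᾱ(x̄·ȳ) on A_α is nondegenerate. In particular A_α is a commutative Frobenius algebra generated by the images of T1 and T2, with nondegenerate trace form ᾱ. -/
/-! `I_α` is the largest ideal contained in `ker α`, so it contains the ideal of finite
codimension witnessing recognizability, and `ᾱ(x̄·ȳ) = 0` for all `ȳ` says precisely that a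
representative of `x̄` lies in `I_α`. -/

open MvPolynomial

/-- The syntactic ideal `I_α = {z | α(z·f) = 0 for all f}` of a linear functional `α`. -/
def synIdeal (k : Type*) [Field k] (α : MvPolynomial (Fin 2) k →ₗ[k] k) :
    Ideal (MvPolynomial (Fin 2) k) where
  carrier := {z | ∀ f : MvPolynomial (Fin 2) k, α (z * f) = 0}
  add_mem' := by
    intro a b ha hb f
    rw [add_mul, map_add, ha f, hb f, add_zero]
  zero_mem' := by
    intro f
    rw [zero_mul, map_zero]
  smul_mem' := by
    intro c z hz f
    have h : (c • z) * f = z * (c * f) := by rw [smul_eq_mul]; ring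
    rw [h]
    exact hz (c * f)

theorem Module.Finite.quotient_of_le {R A : Type*} [CommRing R] [CommRing A] [Algebra R A]
    {I J : Ideal A} (hIJ : I ≤ J) [Module.Finite R (A ⧸ I)] : Module.Finite R (A ⧸ J) :=
  Module.Finite.of_surjective (Ideal.Quotient.factorₐ R hIJ).toLinearMap
    (Ideal.Quotient.factor_surjective hIJ)

theorem Ideal.Quotient.exists_linearMap_lift {R A M : Type*} [CommRing R] [CommRing A]
    [Algebra R A] [AddCommGroup M] [Module R M] (I : Ideal A) (f : A →ₗ[R] M)
    (hf : ∀ z ∈ I, f z = 0) : ∃ g : (A ⧸ I) →ₗ[R] M, ∀ z, g (Ideal.Quotient.mk I z) = f z :=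
  ⟨(I.restrictScalars R).liftQ f hf ∘ₗ (Submodule.Quotient.restrictScalarsEquiv R I).symm,
    fun _ => rfl⟩

theorem MvPolynomial.adjoin_range_comp_X_eq_top_of_surjective {R S σ : Type*} [CommSemiring R]
    [CommSemiring S] [Algebra R S] {φ : MvPolynomial σ R →ₐ[R] S} (hφ : Function.Surjective φ) :
    Algebra.adjoin R (Set.range (φ ∘ X)) = ⊤ := by
  rw [Algebra.adjoin_range_eq_range_aeval, ← aeval_unique, AlgHom.range_eq_top]
  exact hφ

theorem MvPolynomial.adjoin_X_zero_X_one_eq_top_of_surjective {R S : Type*} [CommSemiring R]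
    [CommSemiring S] [Algebra R S] {φ : MvPolynomial (Fin 2) R →ₐ[R] S}
    (hφ : Function.Surjective φ) :
    Algebra.adjoin R {φ (X 0), φ (X 1)} = ⊤ := by
  rw [← adjoin_range_comp_X_eq_top_of_surjective hφ]
  congr 1
  ext; simp [Fin.exists_fin_two, eq_comm]

section

variable {k : Type*} [Field k] {α : MvPolynomial (Fin 2) k →ₗ[k] k}

theorem synIdeal_le_ker : ∀ z ∈ synIdeal k α, α z = 0 :=
  fun z hz => by simpa using hz 1

theorem le_synIdeal_of_le_ker {I : Ideal (MvPolynomial (Fin 2) k)} (hI : ∀ z ∈ I, α z = 0) :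
    I ≤ synIdeal k α :=
  fun z hz f => hI (z * f) (I.mul_mem_right f hz)

theorem exists_lift_mul_ne_zero_of_ne_zero
    {abar : (MvPolynomial (Fin 2) k ⧸ synIdeal k α) →ₗ[k] k}
    (habar : ∀ z, abar (Ideal.Quotient.mk (synIdeal k α) z) = α z)
    {x : MvPolynomial (Fin 2) k ⧸ synIdeal k α} (hx : x ≠ 0) : ∃ y, abar (x * y) ≠ 0 := by
  obtain ⟨z, rfl⟩ := Ideal.Quotient.mk_surjective x
  have hz : z ∉ synIdeal k α := fun h => hx (Ideal.Quotient.eq_zero_iff_mem.2 h)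
  obtain ⟨f, hf⟩ : ∃ f, α (z * f) ≠ 0 := by simpa [synIdeal] using hz
  exact ⟨Ideal.Quotient.mk _ f, by rwa [← map_mul, habar]⟩

end

/-- For recognizable `α`, the quotient `A_α = k[T₁,T₂]/I_α` by the syntactic ideal is a
finite-dimensional commutative algebra, `α` descends to a functional `ᾱ` on `A_α`, the
bilinear form `(x,y) ↦ ᾱ(xy)` is nondegenerate, and `A_α` is generated by the images of
`T₁, T₂`: a commutative Frobenius algebra on two generators with nondegenerate trace. -/
theorem frobenius_of_recognizable (k : Type*) [Field k]
    (α : MvPolynomial (Fin 2) k →ₗ[k] k) (hrec : Recognizable k α) :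
    FiniteDimensional k (MvPolynomial (Fin 2) k ⧸ synIdeal k α) ∧
    ∃ abar : (MvPolynomial (Fin 2) k ⧸ synIdeal k α) →ₗ[k] k,
      (∀ z : MvPolynomial (Fin 2) k, abar (Ideal.Quotient.mk (synIdeal k α) z) = α z) ∧
      (∀ x : MvPolynomial (Fin 2) k ⧸ synIdeal k α, x ≠ 0 → ∃ y, abar (x * y) ≠ 0) ∧
      Algebra.adjoin k {Ideal.Quotient.mk (synIdeal k α) (X 0),
        Ideal.Quotient.mk (synIdeal k α) (X 1)} = ⊤ := by
  obtain ⟨I, hIker, hIfin⟩ := hrec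
  have hfin := Module.Finite.quotient_of_le (R := k) (le_synIdeal_of_le_ker hIker)
  obtain ⟨abar, habar⟩ := Ideal.Quotient.exists_linearMap_lift _ α synIdeal_le_ker
  have hgen :=
    adjoin_X_zero_X_one_eq_top_of_surjective (Ideal.Quotient.mkₐ_surjective k (synIdeal k α))
  exact ⟨hfin, abar, habar, fun _ => exists_lift_mul_ne_zero_of_ne_zero habar, hgen⟩
end

section
/- Let k be a field, B a finite-dimensional commutative k-algebra, β : B → k a linear functional such that the bilinear form (x,y) ↦ β(xy) on B is nondegenerate, and ψ : k[T1,T2] → B a surjective k-algebra homomorphism. Set α := β ∘ ψ : k[T1,T2] → k. Then the syntactic ideal of α equals ker ψ, i.e., I_α = ker ψ. In particular α is recognizable, dim_k(k[T1,T2]/I_α) = dim_k B, and Z_α = Σ_{ℓ,g ≥ 0} β(g1^ℓ g2^g) T1^ℓ T2^g where g1 = ψ(T1) and g2 = ψ(T2). -/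
open MvPolynomial

/-!
Since `α = β ∘ ψ`, an element `z` lies in `I_α` iff `β(ψ z · ψ f) = 0` for all `f`; as `ψ` is
surjective, `ψ f` ranges over all of `B`, so by nondegeneracy of `β` this says `ψ z = 0`.
The remaining claims then follow from `k[T₁,T₂]/ker ψ ≃ B`.
-/

theorem mem_ker_iff_forall_map_mul_eq_zero {k A B F : Type*} [CommSemiring k] [Semiring A]
    [CommSemiring B] [Module k B] [FunLike F A B] [RingHomClass F A B] (β : B →ₗ[k] k)
    (hβ : ∀ x : B, x ≠ 0 → ∃ y : B, β (x * y) ≠ 0)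
    {ψ : F} (hψ : Function.Surjective ψ) (z : A) :
    z ∈ RingHom.ker ψ ↔ ∀ f : A, β (ψ (z * f)) = 0 := by
  refine ⟨fun hz f => by rw [map_mul, RingHom.mem_ker.mp hz, zero_mul, map_zero], fun hz => ?_⟩
  by_contra hne
  obtain ⟨y, hy⟩ := hβ (ψ z) hne
  obtain ⟨f, rfl⟩ := hψ y
  exact hy (by simpa only [map_mul] using hz f)

theorem synIdeal_eq_ker {k B : Type*} [Field k] [CommRing B] [Algebra k B] (β : B →ₗ[k] k)
    (hβ : ∀ x : B, x ≠ 0 → ∃ y : B, β (x * y) ≠ 0)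
    {ψ : MvPolynomial (Fin 2) k →ₐ[k] B} (hψ : Function.Surjective ψ)
    {α : MvPolynomial (Fin 2) k →ₗ[k] k} (hα : ∀ z, α z = β (ψ z)) :
    synIdeal k α = RingHom.ker ψ := by
  ext z
  rw [mem_ker_iff_forall_map_mul_eq_zero β hβ hψ]
  show (∀ f, α (z * f) = 0) ↔ _
  simp only [hα]

section QuotientKer

variable {k A B : Type*} [CommRing k] [CommRing A] [Algebra k A] [CommRing B] [Algebra k B]
  {ψ : A →ₐ[k] B}

theorem Module.Finite.quotient_ker_of_surjective [Module.Finite k B]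
    (hψ : Function.Surjective ψ) :
    Module.Finite k (A ⧸ RingHom.ker ψ) :=
  Module.Finite.equiv (Ideal.quotientKerAlgEquivOfSurjective hψ).symm.toLinearEquiv

theorem finrank_quotient_ker_of_surjective (hψ : Function.Surjective ψ) :
    Module.finrank k (A ⧸ RingHom.ker ψ) = Module.finrank k B :=
  (Ideal.quotientKerAlgEquivOfSurjective hψ).toLinearEquiv.finrank_eq

end QuotientKer

/-- If `B` is a finite-dimensional commutative Frobenius `k`-algebra with nondegenerate
trace `β` and `ψ : k[T₁,T₂] → B` is a surjective algebra map, then for `α = β ∘ ψ`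
the syntactic ideal equals `ker ψ`; in particular `α` is recognizable,
`dim k[T₁,T₂]/I_α = dim B`, and the coefficients of `Z_α` are `β(g₁^ℓ g₂^g)`
for `g₁ = ψ(T₁)`, `g₂ = ψ(T₂)`. -/
theorem synIdeal_eq_ker_of_frobenius (k : Type*) [Field k]
    (B : Type*) [CommRing B] [Algebra k B] [FiniteDimensional k B]
    (β : B →ₗ[k] k)
    (hβ : ∀ x : B, x ≠ 0 → ∃ y : B, β (x * y) ≠ 0)
    (ψ : MvPolynomial (Fin 2) k →ₐ[k] B)
    (hψ : Function.Surjective ψ)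
    (α : MvPolynomial (Fin 2) k →ₗ[k] k)
    (hα : ∀ z : MvPolynomial (Fin 2) k, α z = β (ψ z)) :
    synIdeal k α = RingHom.ker ψ ∧
    Recognizable k α ∧
    Module.finrank k (MvPolynomial (Fin 2) k ⧸ synIdeal k α) = Module.finrank k B ∧
    (∀ l g : ℕ, α ((X 0 : MvPolynomial (Fin 2) k) ^ l * (X 1) ^ g) =
      β (ψ (X 0) ^ l * ψ (X 1) ^ g)) := by
  have hker := synIdeal_eq_ker β hβ hψ hα
  refine ⟨hker, ?_, ?_, fun l g => by rw [hα, map_mul, map_pow, map_pow]⟩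
  · refine ⟨synIdeal k α, fun x hx => by simpa only [mul_one] using hx 1, ?_⟩
    rw [hker]
    exact Module.Finite.quotient_ker_of_surjective hψ
  · rw [hker, finrank_quotient_ker_of_surjective hψ]
end

section
/- Let k be a field and α : k[T1,T2] → k a linear functional. Then the syntactic ideal I_α has codimension 1 (i.e., dim_k k[T1,T2]/I_α = 1) if and only if there exist λ ∈ k with λ ≠ 0 and λ1, λ2 ∈ k such that α(T1^ℓ T2^g) = λ·λ1^ℓ·λ2^g for all ℓ, g ≥ 0. (In this case I_α is the maximal ideal (T1 − λ1, T2 − λ2), so the codimension-1 recognizable series are parametrized by triples (λ1, λ2, λ) ∈ k × k × k^×.) -/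
/-!
Codimension one means that `I_α` is the kernel of a `k`-algebra map `φ : k[T₁,T₂] → k`, i.e. of
evaluation at `(λ₁, λ₂) = (φ T₁, φ T₂)`; and `I_α = ker φ` holds exactly when `α` is a nonzero
multiple `λ • φ`.
-/

open MvPolynomial

theorem Ideal.finrank_quotient_eq_one_iff_exists_ker_eq {k A : Type*} [Field k] [CommRing A]
    [Algebra k A] (I : Ideal A) :
    Module.finrank k (A ⧸ I) = 1 ↔ ∃ φ : A →ₐ[k] k, RingHom.ker φ = I := by
  constructor
  · intro h
    let e : k ≃ₐ[k] A ⧸ I := AlgEquiv.ofBijective (Algebra.ofId k (A ⧸ I))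
      (Algebra.finrank_eq_one_iff_bijective_algebraMap.mp h)
    refine ⟨e.symm.toAlgHom.comp (Ideal.Quotient.mkₐ k I), ?_⟩
    ext z
    simp [Ideal.Quotient.eq_zero_iff_mem]
  · rintro ⟨φ, rfl⟩
    have hφ : Function.Surjective φ := fun c => ⟨algebraMap k A c, φ.commutes c⟩
    exact (Ideal.quotientKerAlgEquivOfSurjective hφ).toLinearEquiv.finrank_eq.trans
      (Module.finrank_self k)

section

variable {k : Type*} [Field k]

theorem mem_synIdeal {α : MvPolynomial (Fin 2) k →ₗ[k] k} {z : MvPolynomial (Fin 2) k} :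
    z ∈ synIdeal k α ↔ ∀ f, α (z * f) = 0 :=
  Iff.rfl

theorem synIdeal_eq_ker_iff (α : MvPolynomial (Fin 2) k →ₗ[k] k)
    (φ : MvPolynomial (Fin 2) k →ₐ[k] k) :
    synIdeal k α = RingHom.ker φ ↔ ∃ lam : k, lam ≠ 0 ∧ α = lam • φ.toLinearMap := by
  constructor
  · intro h
    -- `p - φ p` lies in `ker φ = I_α`, so `α` only sees `φ p`.
    have hα : ∀ p, α p = α 1 * φ p := by
      intro p
      have hp : p - C (φ p) ∈ synIdeal k α := by
        rw [h, RingHom.mem_ker, map_sub, ← algebraMap_eq, AlgHom.commutes]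
        exact sub_self _
      have := mem_synIdeal.mp hp 1
      rwa [mul_one, map_sub, sub_eq_zero, C_eq_smul_one, map_smul, smul_eq_mul,
        mul_comm] at this
    refine ⟨α 1, fun h0 => ?_, LinearMap.ext fun p => hα p⟩
    have h1 : (1 : MvPolynomial (Fin 2) k) ∈ RingHom.ker φ :=
      h ▸ mem_synIdeal.mpr fun f => by rw [one_mul, hα, h0, zero_mul]
    simp at h1
  · rintro ⟨lam, hlam, rfl⟩
    ext z
    simp only [mem_synIdeal, RingHom.mem_ker, LinearMap.smul_apply, AlgHom.toLinearMap_apply,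
      map_mul, smul_eq_mul, mul_eq_zero, hlam, false_or]
    exact ⟨fun hz => by simpa using hz 1, fun hz f => Or.inl hz⟩

theorem eq_smul_aeval_iff (α : MvPolynomial (Fin 2) k →ₗ[k] k) (lam l1 l2 : k) :
    α = lam • (aeval ![l1, l2]).toLinearMap ↔
      ∀ l g : ℕ, α ((X 0 : MvPolynomial (Fin 2) k) ^ l * (X 1) ^ g) = lam * l1 ^ l * l2 ^ g := by
  constructor
  · rintro rfl l g
    simp [mul_assoc]
  · intro h
    refine linearMap_ext fun s => LinearMap.ext_ring ?_
    have hs : monomial s (1 : k) = X 0 ^ s 0 * X 1 ^ s 1 := by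
      rw [monomial_eq, C_1, one_mul, Finsupp.prod_fintype _ _ fun _ => pow_zero _,
        Fin.prod_univ_two]
    simp only [LinearMap.comp_apply, hs, h]
    simp [mul_assoc]

end

/-- The syntactic ideal of `α` has codimension 1 iff `α(T₁^ℓ T₂^g) = λ·λ₁^ℓ·λ₂^g` for some
`λ ≠ 0` and scalars `λ₁, λ₂`. -/
theorem codim_one_iff_geometric (k : Type*) [Field k]
    (α : MvPolynomial (Fin 2) k →ₗ[k] k) :
    Module.finrank k (MvPolynomial (Fin 2) k ⧸ synIdeal k α) = 1 ↔
      ∃ (lam l1 l2 : k), lam ≠ 0 ∧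
        ∀ l g : ℕ, α ((X 0 : MvPolynomial (Fin 2) k) ^ l * (X 1) ^ g) =
          lam * l1 ^ l * l2 ^ g := by
  rw [Ideal.finrank_quotient_eq_one_iff_exists_ker_eq]
  constructor
  · rintro ⟨φ, hφ⟩
    obtain ⟨lam, hlam, hα⟩ := (synIdeal_eq_ker_iff α φ).mp hφ.symm
    refine ⟨lam, φ (X 0), φ (X 1), hlam, fun l g => ?_⟩
    simp [hα, mul_assoc]
  · rintro ⟨lam, l1, l2, hlam, h⟩
    exact ⟨aeval ![l1, l2],
      ((synIdeal_eq_ker_iff α _).mpr ⟨lam, hlam, (eq_smul_aeval_iff α lam l1 l2).mpr h⟩).symm⟩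
end

section
/- Let α : ℂ[T1,T2] → ℂ be a recognizable linear functional whose syntactic ideal I_α has codimension m (i.e., dim_ℂ ℂ[T1,T2]/I_α = m). Then for every integer n ≥ m there exists an ideal I of ℂ[T1,T2] with I ⊆ I_α and dim_ℂ ℂ[T1,T2]/I = n. (This is the algebraic content of the surjectivity of the map from the dual tautological bundle of the Hilbert scheme of n points, p ↦ α_p, onto the set of recognizable series of codimension at most n.) -/
/-!
If `J` has finite codimension in `k[T₁,T₂]` with `k` infinite, then `J ≠ 0`, so some element
of `J` does not vanish at some point `x`; hence `J` is coprime to the maximal ideal `𝔪ₓ`, and by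
the Chinese remainder theorem `J ⊓ 𝔪ₓ` has codimension one more than `J`. Starting from `I_α`,
which has finite codimension because it contains the ideal witnessing recognizability, this
reaches every codimension `n ≥ m`.
-/

open MvPolynomial

namespace Ideal

variable {k A : Type*} [Field k] [CommRing A] [Algebra k A]

noncomputable def quotientInfAlgEquivQuotientProd (I J : Ideal A) (h : IsCoprime I J) :
    (A ⧸ I ⊓ J) ≃ₐ[k] (A ⧸ I) × (A ⧸ J) :=
  AlgEquiv.ofRingEquiv (f := quotientInfEquivQuotientProd I J h) fun _ => rfl

theorem finrank_quotient_inf_of_isCoprime {I J : Ideal A} (h : IsCoprime I J)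
    [FiniteDimensional k (A ⧸ I)] [FiniteDimensional k (A ⧸ J)] :
    Module.finrank k (A ⧸ I ⊓ J) = Module.finrank k (A ⧸ I) + Module.finrank k (A ⧸ J) := by
  rw [(quotientInfAlgEquivQuotientProd (k := k) I J h).toLinearEquiv.finrank_eq,
    Module.finrank_prod]

end Ideal

theorem AlgHom.finrank_quotient_ker {k A : Type*} [Field k] [CommRing A] [Algebra k A]
    (φ : A →ₐ[k] k) : Module.finrank k (A ⧸ RingHom.ker φ) = 1 := by
  have hφ : Function.Surjective φ := fun c => ⟨algebraMap k A c, φ.commutes c⟩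
  rw [(Ideal.quotientKerAlgEquivOfSurjective hφ).toLinearEquiv.finrank_eq, Module.finrank_self]

namespace MvPolynomial

variable {σ R : Type*} [CommRing R]

theorem not_moduleFinite [Nontrivial R] [Nonempty σ] : ¬ Module.Finite R (MvPolynomial σ R) :=
  fun _ =>
    have := Module.Finite.finite_basis (basisMonomials σ R)
    not_finite (σ →₀ ℕ)

theorem exists_not_le_ker_aeval [IsDomain R] [Infinite R] [Nonempty σ]
    (J : Ideal (MvPolynomial σ R)) [Module.Finite R (MvPolynomial σ R ⧸ J)] :
    ∃ x : σ → R, ¬ J ≤ RingHom.ker (aeval x) := by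
  by_contra! hJ
  have hbot : J = ⊥ := by
    refine (Submodule.eq_bot_iff J).2 fun f hf => funext fun x => ?_
    simpa [coe_aeval_eq_eval] using hJ x hf
  subst hbot
  exact not_moduleFinite
    (Module.Finite.equiv (AlgEquiv.quotientBot R (MvPolynomial σ R)).toLinearEquiv)

variable {k : Type*} [Field k] [Infinite k]

theorem exists_le_finrank_quotient_eq_succ [Nonempty σ] (J : Ideal (MvPolynomial σ k))
    [FiniteDimensional k (MvPolynomial σ k ⧸ J)] :
    ∃ K ≤ J, Module.finrank k (MvPolynomial σ k ⧸ K) =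
      Module.finrank k (MvPolynomial σ k ⧸ J) + 1 := by
  obtain ⟨x, hx⟩ := exists_not_le_ker_aeval J
  have hmax : (RingHom.ker (aeval x)).IsMaximal := RingHom.ker_isMaximal_of_surjective _
    fun c => ⟨C c, aeval_C x c⟩
  have hcop : IsCoprime J (RingHom.ker (aeval x)) := by
    rw [Ideal.isCoprime_iff_codisjoint]
    exact (hmax.out.not_le_iff_codisjoint.1 hx).symm
  have := Module.finite_of_finrank_eq_succ (aeval x).finrank_quotient_ker
  refine ⟨J ⊓ RingHom.ker (aeval x), inf_le_left, ?_⟩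
  rw [Ideal.finrank_quotient_inf_of_isCoprime hcop, AlgHom.finrank_quotient_ker]

theorem exists_le_finrank_quotient_eq [Nonempty σ] (J : Ideal (MvPolynomial σ k))
    [FiniteDimensional k (MvPolynomial σ k ⧸ J)] {n : ℕ}
    (hn : Module.finrank k (MvPolynomial σ k ⧸ J) ≤ n) :
    ∃ K ≤ J, FiniteDimensional k (MvPolynomial σ k ⧸ K) ∧
      Module.finrank k (MvPolynomial σ k ⧸ K) = n := by
  induction n, hn using Nat.le_induction with
  | base => exact ⟨J, le_rfl, inferInstance, rfl⟩
  | succ n _ ih =>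
    obtain ⟨K, hKJ, _, rfl⟩ := ih
    obtain ⟨L, hLK, hL⟩ := exists_le_finrank_quotient_eq_succ K
    exact ⟨L, hLK.trans hKJ, Module.finite_of_finrank_eq_succ hL, hL⟩

end MvPolynomial

theorem Recognizable.finiteDimensional_quotient_synIdeal {k : Type*} [Field k]
    {α : MvPolynomial (Fin 2) k →ₗ[k] k} (hα : Recognizable k α) :
    FiniteDimensional k (MvPolynomial (Fin 2) k ⧸ synIdeal k α) := by
  obtain ⟨I, hIα, _⟩ := hα
  have hI : I ≤ synIdeal k α := fun z hz f => hIα _ (I.mul_mem_right f hz)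
  exact Module.Finite.of_surjective (Ideal.Quotient.factorₐ k hI).toLinearMap
    (Ideal.Quotient.factor_surjective hI)

/-- If `α : ℂ[T₁,T₂] → ℂ` is recognizable with syntactic ideal of codimension `m`, then for
every `n ≥ m` there is an ideal `I ⊆ I_α` of codimension exactly `n`. -/
theorem exists_ideal_of_each_codim (α : MvPolynomial (Fin 2) ℂ →ₗ[ℂ] ℂ)
    (hrec : Recognizable ℂ α) (m : ℕ)
    (hm : Module.finrank ℂ (MvPolynomial (Fin 2) ℂ ⧸ synIdeal ℂ α) = m) :
    ∀ n : ℕ, m ≤ n →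
      ∃ I : Ideal (MvPolynomial (Fin 2) ℂ), I ≤ synIdeal ℂ α ∧
        FiniteDimensional ℂ (MvPolynomial (Fin 2) ℂ ⧸ I) ∧
        Module.finrank ℂ (MvPolynomial (Fin 2) ℂ ⧸ I) = n := by
  have := hrec.finiteDimensional_quotient_synIdeal
  intro n hn
  exact exists_le_finrank_quotient_eq _ (hm ▸ hn)
end

section
/- Let k be a field, n ≥ 1, and α : k[T_1,…,T_n] → k a linear functional on the polynomial ring in n variables, with generating power series Z_α := Σ_{a ∈ ℕ^n} α(T^a) T^a in k[[T_1,…,T_n]]. Then there exists an ideal I of k[T_1,…,T_n] contained in ker α with k[T_1,…,T_n]/I finite-dimensional over k if and only if there exist a polynomial P ∈ k[T_1,…,T_n] and one-variable polynomials Q_1,…,Q_n ∈ k[T] with Q_i(0) ≠ 0 for all i such that Z_α · Q_1(T_1) ⋯ Q_n(T_n) = P holds in k[[T_1,…,T_n]]. -/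
/-!
Let `J_α = {x | α (p * x) = 0 for all p}`, the largest ideal inside `ker α`. An ideal of finite
codimension inside `ker α` exists iff `k[T]/J_α` is finite-dimensional, i.e. iff every `Tᵢ`
satisfies a nonzero relation `fᵢ(Tᵢ) ∈ J_α`. Such a relation is a linear recurrence in direction
`i` for the coefficients of `Z_α`; for `Qᵢ` the reversal of `fᵢ` it says that `Z_α * Qᵢ(Tᵢ)` has
bounded degree in `Tᵢ`. Multiplying by the other factors `Qⱼ(Tⱼ)`, which do not involve `Tᵢ`,
keeps the `Tᵢ`-degree bounded, so `Z_α * ∏ Qᵢ(Tᵢ)` is bounded in every variable: a polynomial.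
Conversely, `Z_α * Qᵢ(Tᵢ) = P * (∏_{j ≠ i} Qⱼ(Tⱼ))⁻¹`, and this inverse does not involve `Tᵢ`
either, being fixed by the substitution `Tᵢ ↦ 0`; so `Z_α * Qᵢ(Tᵢ)` has `Tᵢ`-degree at most
that of `P`.
-/

open MvPolynomial

theorem Finsupp.add_single_tsub_single {σ : Type*} (a : σ →₀ ℕ) (i : σ) {d j : ℕ} (hj : j ≤ d) :
    a + single i d - single i j = a + single i (d - j) := by
  rw [← Nat.sub_add_cancel hj, single_add, ← add_assoc, add_tsub_cancel_right, Nat.add_sub_cancel]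

theorem MvPolynomial.aeval_X_eq_sum_monomial {σ R : Type*} [CommSemiring R] (i : σ)
    (g : Polynomial R) {m : ℕ} (hg : g.natDegree < m) :
    Polynomial.aeval (X i : MvPolynomial σ R) g =
      ∑ j ∈ Finset.range m, monomial (Finsupp.single i j) (g.coeff j) := by
  conv_lhs => rw [g.as_sum_range' m hg]
  simp only [map_sum, Polynomial.aeval_monomial, algebraMap_eq, C_mul_X_pow_eq_monomial]

theorem MvPolynomial.coeff_coe_eq_zero_of_degreeOf_lt {σ R : Type*} [CommSemiring R]
    (P : MvPolynomial σ R) {i : σ} {b : σ →₀ ℕ} (hb : P.degreeOf i < b i) :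
    MvPowerSeries.coeff b (P : MvPowerSeries σ R) = 0 := by
  rw [coeff_coe, ← notMem_support_iff]
  exact notMem_support_of_degreeOf_lt i hb

namespace MvPowerSeries

variable {σ R : Type*}

section FreeOfVar

variable [CommRing R] [DecidableEq σ]

noncomputable def setVarZero (i : σ) : MvPowerSeries σ R →ₐ[R] MvPowerSeries σ R :=
  rescaleAlgHom (Function.update 1 i 0)

theorem coeff_setVarZero (i : σ) (φ : MvPowerSeries σ R) (b : σ →₀ ℕ) :
    coeff b (setVarZero i φ) = if b i = 0 then coeff b φ else 0 := by
  rw [setVarZero, rescaleAlgHom_apply, coeff_rescale, Finsupp.prod]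
  by_cases hb : b i = 0
  · rw [if_pos hb, Finset.prod_eq_one, one_mul]
    intro s hs
    rw [Function.update_of_ne (by rintro rfl; exact (Finsupp.mem_support_iff.1 hs) hb),
      Pi.one_apply, one_pow]
  · rw [if_neg hb, Finset.prod_eq_zero (Finsupp.mem_support_iff.2 hb), zero_mul]
    rw [Function.update_self, zero_pow hb]

noncomputable def freeOfVar (i : σ) : Subalgebra R (MvPowerSeries σ R) :=
  AlgHom.equalizer (setVarZero i) (AlgHom.id R _)

theorem mem_freeOfVar_iff {i : σ} {φ : MvPowerSeries σ R} :
    φ ∈ freeOfVar i ↔ ∀ b : σ →₀ ℕ, b i ≠ 0 → coeff b φ = 0 := by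
  rw [freeOfVar, AlgHom.mem_equalizer, AlgHom.id_apply, MvPowerSeries.ext_iff]
  refine forall_congr' fun b => ?_
  rw [coeff_setVarZero]
  by_cases hb : b i = 0 <;> simp [hb, eq_comm]

theorem X_mem_freeOfVar {i j : σ} (hji : j ≠ i) : X j ∈ freeOfVar (R := R) i := by
  rw [mem_freeOfVar_iff]
  intro b hb
  rw [coeff_X, if_neg]
  rintro rfl
  exact hb (Finsupp.single_eq_of_ne hji.symm)

theorem coe_aeval_X_mem_freeOfVar {i j : σ} (hji : j ≠ i) (g : Polynomial R) :
    ((Polynomial.aeval (MvPolynomial.X j) g : MvPolynomial σ R) : MvPowerSeries σ R) ∈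
      freeOfVar i := by
  have hcoe : ((Polynomial.aeval (MvPolynomial.X j) g : MvPolynomial σ R) : MvPowerSeries σ R) =
      Polynomial.aeval (X j) g := by
    simpa using (Polynomial.aeval_algHom_apply (coeToMvPowerSeries.algHom R)
      (MvPolynomial.X j : MvPolynomial σ R) g).symm
  rw [hcoe]
  exact Algebra.adjoin_le (Set.singleton_subset_iff.2 (X_mem_freeOfVar hji))
    (Polynomial.aeval_mem_adjoin_singleton R _)

theorem coeff_mul_eq_zero_of_mem_freeOfVar {i : σ} {N : ℕ} {φ ψ : MvPowerSeries σ R}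
    (hφ : ∀ b : σ →₀ ℕ, N ≤ b i → coeff b φ = 0) (hψ : ψ ∈ freeOfVar i) :
    ∀ b : σ →₀ ℕ, N ≤ b i → coeff b (φ * ψ) = 0 := by
  intro b hb
  rw [coeff_mul]
  refine Finset.sum_eq_zero fun q hq => ?_
  rw [Finset.HasAntidiagonal.mem_antidiagonal] at hq
  by_cases hqi : q.2 i = 0
  · rw [← hq, Finsupp.add_apply, hqi, add_zero] at hb
    rw [hφ q.1 hb, zero_mul]
  · rw [mem_freeOfVar_iff.1 hψ q.2 hqi, mul_zero]

end FreeOfVar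

theorem inv_mem_freeOfVar {k : Type*} [Field k] [DecidableEq σ] {i : σ}
    {φ : MvPowerSeries σ k} (hφ : φ ∈ freeOfVar i) : φ⁻¹ ∈ freeOfVar i := by
  by_cases h : constantCoeff φ = 0
  -- the junk value `φ⁻¹ = 0`
  · rw [inv_eq_zero.2 h]
    exact zero_mem _
  · have hφ' : setVarZero i φ = φ := hφ
    change setVarZero i φ⁻¹ = φ⁻¹
    rw [MvPowerSeries.eq_inv_iff_mul_eq_one h]
    calc setVarZero i φ⁻¹ * φ = setVarZero i (φ⁻¹ * φ) := by rw [map_mul, hφ']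
      _ = 1 := by rw [MvPowerSeries.inv_mul_cancel _ h, map_one]

theorem constantCoeff_coe_aeval_X [CommSemiring R] (j : σ) (g : Polynomial R) :
    constantCoeff ((Polynomial.aeval (MvPolynomial.X j) g : MvPolynomial σ R) :
      MvPowerSeries σ R) = g.eval 0 := by
  rw [← coeff_zero_eq_constantCoeff_apply, coeff_coe, ← MvPolynomial.constantCoeff_eq,
    Polynomial.aeval_def, Polynomial.hom_eval₂, constantCoeff_comp_algebraMap,
    MvPolynomial.constantCoeff_X]
  rfl

theorem exists_coe_eq_of_coeff_eq_zero_s14 [CommSemiring R] [Finite σ] {φ : MvPowerSeries σ R}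
    (h : ∀ i, ∃ N : ℕ, ∀ b : σ →₀ ℕ, N ≤ b i → coeff b φ = 0) :
    ∃ P : MvPolynomial σ R, (P : MvPowerSeries σ R) = φ := by
  classical
  choose N hN using h
  refine ⟨trunc' R (Finsupp.equivFunOnFinite.symm N) φ, ext fun b => ?_⟩
  rw [coeff_coe, coeff_trunc']
  split_ifs with hb
  · rfl
  · obtain ⟨i, hi⟩ : ∃ i, N i < b i := by
      simpa [Finsupp.le_def] using hb
    exact (hN i b hi.le).symm

theorem coeff_add_single_mul_aeval_reflect [CommSemiring R] (φ : MvPowerSeries σ R) (i : σ)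
    (a : σ →₀ ℕ) {f : Polynomial R} {d : ℕ} (hf : f.natDegree ≤ d) :
    coeff (a + Finsupp.single i d)
        (φ * ((Polynomial.aeval (MvPolynomial.X i : MvPolynomial σ R) (f.reflect d) :
          MvPolynomial σ R) : MvPowerSeries σ R)) =
      ∑ l ∈ Finset.range (d + 1), f.coeff l * coeff (a + Finsupp.single i l) φ := by
  have hdeg : (f.reflect d).natDegree < d + 1 :=
    Nat.lt_succ_of_le (Polynomial.natDegree_reflect_le.trans (max_le le_rfl hf))
  rw [aeval_X_eq_sum_monomial i _ hdeg, ← coeToMvPowerSeries.ringHom_apply, map_sum,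
    Finset.mul_sum, map_sum, ← Finset.sum_range_reflect, Nat.add_sub_cancel]
  refine Finset.sum_congr rfl fun j hj => ?_
  have hj : j ≤ d := Nat.lt_succ_iff.1 (Finset.mem_range.1 hj)
  have hle : Finsupp.single i (d - j) ≤ a + Finsupp.single i d :=
    Finsupp.single_le_iff.2 (by rw [Finsupp.add_apply, Finsupp.single_eq_same]; omega)
  rw [coeToMvPowerSeries.ringHom_apply, coe_monomial, coeff_mul_monomial, if_pos hle,
    Polynomial.coeff_reflect, Polynomial.revAt_le (Nat.sub_le d j), Nat.sub_sub_self hj,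
    Finsupp.add_single_tsub_single a i (Nat.sub_le d j), Nat.sub_sub_self hj, mul_comm]

end MvPowerSeries

namespace LinearMap

variable {k A : Type*} [Semiring k] [Semiring A] [Module k A]

def largestIdealInKer (α : A →ₗ[k] k) : Ideal A where
  carrier := {x | ∀ p, α (p * x) = 0}
  zero_mem' p := by rw [mul_zero, map_zero]
  add_mem' hx hy p := by rw [mul_add, map_add, hx p, hy p, add_zero]
  smul_mem' c x hx p := by rw [smul_eq_mul, ← mul_assoc, hx]

theorem largestIdealInKer_le_ker (α : A →ₗ[k] k) {x : A} (hx : x ∈ largestIdealInKer α) :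
    α x = 0 := by
  simpa using hx 1

theorem le_largestIdealInKer {α : A →ₗ[k] k} {I : Ideal A} (hI : ∀ x ∈ I, α x = 0) :
    I ≤ largestIdealInKer α := fun _ hx p => hI _ (I.mul_mem_left p hx)

end LinearMap

theorem LinearMap.exists_ideal_le_ker_finiteDimensional_iff {k A : Type*} [Field k] [CommRing A]
    [Algebra k A] (α : A →ₗ[k] k) :
    (∃ I : Ideal A, (∀ x ∈ I, α x = 0) ∧ FiniteDimensional k (A ⧸ I)) ↔
      FiniteDimensional k (A ⧸ largestIdealInKer α) := by
  refine ⟨fun ⟨I, hI, _⟩ => ?_, fun h => ⟨_, fun _ => largestIdealInKer_le_ker α, h⟩⟩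
  have hle := le_largestIdealInKer hI
  exact Module.Finite.of_surjective (Ideal.Quotient.factorₐ k hle).toLinearMap
    (Ideal.Quotient.factor_surjective hle)

theorem MvPolynomial.mem_largestIdealInKer_iff {σ k : Type*} [CommSemiring k]
    {α : MvPolynomial σ k →ₗ[k] k} {x : MvPolynomial σ k} :
    x ∈ α.largestIdealInKer ↔ ∀ a : σ →₀ ℕ, α (monomial a 1 * x) = 0 := by
  refine ⟨fun hx a => hx _, fun hx p => ?_⟩
  induction p using MvPolynomial.induction_on' with
  | monomial a c =>
    have hc : monomial a c = c • monomial a (1 : k) := by rw [smul_monomial, smul_eq_mul, mul_one]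
    rw [hc, smul_mul_assoc, map_smul, hx, smul_zero]
  | add p q hp hq => rw [add_mul, map_add, hp, hq, add_zero]

theorem MvPolynomial.finiteDimensional_quotient_iff_s14 {σ k : Type*} [Field k] [Finite σ]
    (J : Ideal (MvPolynomial σ k)) :
    FiniteDimensional k (MvPolynomial σ k ⧸ J) ↔
      ∀ i, ∃ f : Polynomial k, f ≠ 0 ∧ Polynomial.aeval (X i) f ∈ J := by
  have aeval_mk (i : σ) (f : Polynomial k) : Polynomial.aeval (Ideal.Quotient.mk J (X i)) f =
      Ideal.Quotient.mk J (Polynomial.aeval (X i) f) := by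
    rw [← Ideal.Quotient.mkₐ_eq_mk k, Polynomial.aeval_algHom_apply]
  constructor
  · intro _ i
    obtain ⟨f, hf, hfX⟩ := IsIntegral.of_finite k (Ideal.Quotient.mk J (X i))
    refine ⟨f, hf.ne_zero, ?_⟩
    rw [← Ideal.Quotient.eq_zero_iff_mem, ← aeval_mk]
    exact hfX
  · intro h
    have hX (i : σ) : IsIntegral k (Ideal.Quotient.mk J (X i)) := by
      obtain ⟨f, hf, hfX⟩ := h i
      exact IsAlgebraic.isIntegral
        ⟨f, hf, by rw [aeval_mk, Ideal.Quotient.eq_zero_iff_mem]; exact hfX⟩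
    have : Algebra.IsIntegral k (MvPolynomial σ k ⧸ J) := by
      refine ⟨fun x => ?_⟩
      obtain ⟨p, rfl⟩ := Ideal.Quotient.mk_surjective x
      induction p using MvPolynomial.induction_on with
      | C a => exact isIntegral_algebraMap
      | add p q hp hq => rw [map_add]; exact hp.add hq
      | mul_X p i hp => rw [map_mul]; exact hp.mul (hX i)
    exact Algebra.IsIntegral.finite

section GeneratingSeries

variable {σ k : Type*} [Field k] {α : MvPolynomial σ k →ₗ[k] k} {Z : MvPowerSeries σ k}

theorem apply_monomial_mul_aeval_X
    (hZ : ∀ d : σ →₀ ℕ, MvPowerSeries.coeff d Z = α (monomial d 1)) (i : σ) (a : σ →₀ ℕ)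
    {f : Polynomial k} {d : ℕ} (hf : f.natDegree ≤ d) :
    α (monomial a 1 * Polynomial.aeval (X i) f) =
      MvPowerSeries.coeff (a + Finsupp.single i d)
        (Z * ((Polynomial.aeval (X i : MvPolynomial σ k) (f.reflect d) : MvPolynomial σ k) :
          MvPowerSeries σ k)) := by
  rw [MvPowerSeries.coeff_add_single_mul_aeval_reflect _ _ _ hf,
    aeval_X_eq_sum_monomial i f (Nat.lt_succ_of_le hf), Finset.mul_sum, map_sum]
  refine Finset.sum_congr rfl fun l _ => ?_
  rw [monomial_mul, one_mul, hZ, ← smul_eq_mul, ← map_smul, smul_monomial, smul_eq_mul,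
    mul_one]

theorem aeval_X_mem_largestIdealInKer_iff
    (hZ : ∀ d : σ →₀ ℕ, MvPowerSeries.coeff d Z = α (monomial d 1))
    (i : σ) {f : Polynomial k} {d : ℕ} (hf : f.natDegree ≤ d) :
    Polynomial.aeval (X i) f ∈ α.largestIdealInKer ↔
      ∀ b : σ →₀ ℕ, d ≤ b i → MvPowerSeries.coeff b
        (Z * ((Polynomial.aeval (X i : MvPolynomial σ k) (f.reflect d) : MvPolynomial σ k) :
          MvPowerSeries σ k)) = 0 := by
  simp only [mem_largestIdealInKer_iff, apply_monomial_mul_aeval_X hZ i _ hf]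
  refine ⟨fun h b hb => ?_, fun h a => h _ (by simp)⟩
  rw [← tsub_add_cancel_of_le (Finsupp.single_le_iff.2 hb)]
  exact h _

variable [Fintype σ] [DecidableEq σ]

theorem exists_mul_prod_eq_coe_of_forall_aeval_X_mem
    (hZ : ∀ d : σ →₀ ℕ, MvPowerSeries.coeff d Z = α (monomial d 1))
    (h : ∀ i, ∃ f : Polynomial k, f ≠ 0 ∧ Polynomial.aeval (X i) f ∈ α.largestIdealInKer) :
    ∃ (P : MvPolynomial σ k) (Q : σ → Polynomial k), (∀ i, (Q i).eval 0 ≠ 0) ∧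
      Z * ∏ i, ((Polynomial.aeval (X i : MvPolynomial σ k) (Q i) : MvPolynomial σ k) :
        MvPowerSeries σ k) = (P : MvPowerSeries σ k) := by
  choose f hf0 hfJ using h
  set A : σ → MvPowerSeries σ k := fun i =>
    ((Polynomial.aeval (X i : MvPolynomial σ k) (f i).reverse : MvPolynomial σ k) :
      MvPowerSeries σ k)
  obtain ⟨P, hP⟩ := MvPowerSeries.exists_coe_eq_of_coeff_eq_zero_s14 (φ := Z * ∏ i, A i) fun i => by
    refine ⟨(f i).natDegree, ?_⟩
    rw [← Finset.mul_prod_erase _ _ (Finset.mem_univ i), ← mul_assoc]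
    exact MvPowerSeries.coeff_mul_eq_zero_of_mem_freeOfVar
      ((aeval_X_mem_largestIdealInKer_iff hZ i le_rfl).1 (hfJ i))
      (Subalgebra.prod_mem _ fun j hj =>
        MvPowerSeries.coe_aeval_X_mem_freeOfVar (Finset.ne_of_mem_erase hj) _)
  refine ⟨P, fun i => (f i).reverse, fun i => ?_, hP.symm⟩
  rw [← Polynomial.coeff_zero_eq_eval_zero, Polynomial.coeff_zero_reverse]
  exact Polynomial.leadingCoeff_ne_zero.2 (hf0 i)

theorem exists_aeval_X_mem_of_mul_prod_eq_coe
    (hZ : ∀ d : σ →₀ ℕ, MvPowerSeries.coeff d Z = α (monomial d 1))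
    {P : MvPolynomial σ k} {Q : σ → Polynomial k} (hQ : ∀ i, (Q i).eval 0 ≠ 0)
    (hP : Z * ∏ i, ((Polynomial.aeval (X i : MvPolynomial σ k) (Q i) : MvPolynomial σ k) :
        MvPowerSeries σ k) = (P : MvPowerSeries σ k)) (i : σ) :
    ∃ f : Polynomial k, f ≠ 0 ∧ Polynomial.aeval (X i) f ∈ α.largestIdealInKer := by
  set A : σ → MvPowerSeries σ k := fun i =>
    ((Polynomial.aeval (X i : MvPolynomial σ k) (Q i) : MvPolynomial σ k) : MvPowerSeries σ k)
  set V := ∏ j ∈ Finset.univ.erase i, A j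
  have hV : MvPowerSeries.constantCoeff V ≠ 0 := by
    simp only [V, A, map_prod, MvPowerSeries.constantCoeff_coe_aeval_X]
    exact Finset.prod_ne_zero_iff.2 fun j _ => hQ j
  have hZA : Z * A i = P * V⁻¹ := by
    rw [MvPowerSeries.eq_mul_inv_iff_mul_eq hV, mul_assoc,
      Finset.mul_prod_erase _ _ (Finset.mem_univ i), hP]
  have hvanish : ∀ b : σ →₀ ℕ, P.degreeOf i + 1 ≤ b i → MvPowerSeries.coeff b (Z * A i) = 0 := by
    rw [hZA]
    exact MvPowerSeries.coeff_mul_eq_zero_of_mem_freeOfVar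
      (fun b hb => P.coeff_coe_eq_zero_of_degreeOf_lt hb)
      (MvPowerSeries.inv_mem_freeOfVar (Subalgebra.prod_mem _ fun j hj =>
        MvPowerSeries.coe_aeval_X_mem_freeOfVar (Finset.ne_of_mem_erase hj) _))
  -- reflecting in a degree `d ≥ deg Qᵢ` that also exceeds `degreeOf i P`
  set d := (Q i).natDegree + (P.degreeOf i + 1)
  have hQ0 : Q i ≠ 0 := fun h => hQ i (by rw [h, Polynomial.eval_zero])
  refine ⟨(Q i).reflect d, Polynomial.reflect_eq_zero_iff.not.2 hQ0, ?_⟩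
  rw [aeval_X_mem_largestIdealInKer_iff hZ i
    (Polynomial.natDegree_reflect_le.trans (max_le le_rfl (Nat.le_add_right _ _))),
    Polynomial.reflect_reflect]
  exact fun b hb => hvanish b (le_trans (Nat.le_add_left _ _) hb)

end GeneratingSeries

theorem recognizable_iff_rational_multivariable_general (k : Type*) [Field k] (n : ℕ)
    (α : MvPolynomial (Fin n) k →ₗ[k] k)
    (Z : MvPowerSeries (Fin n) k)
    (hZ : ∀ d : Fin n →₀ ℕ, MvPowerSeries.coeff d Z = α (monomial d 1)) :
    (∃ I : Ideal (MvPolynomial (Fin n) k),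
        (∀ x ∈ I, α x = 0) ∧ FiniteDimensional k (MvPolynomial (Fin n) k ⧸ I)) ↔
      ∃ (P : MvPolynomial (Fin n) k) (Q : Fin n → Polynomial k),
        (∀ i, (Q i).eval 0 ≠ 0) ∧
        Z * ∏ i : Fin n,
            ((Polynomial.aeval (X i : MvPolynomial (Fin n) k) (Q i) :
                MvPolynomial (Fin n) k) : MvPowerSeries (Fin n) k)
          = (P : MvPowerSeries (Fin n) k) := by
  rw [LinearMap.exists_ideal_le_ker_finiteDimensional_iff, finiteDimensional_quotient_iff_s14]
  exact ⟨exists_mul_prod_eq_coe_of_forall_aeval_X_mem hZ,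
    fun ⟨_, _, hQ, hP⟩ => exists_aeval_X_mem_of_mul_prod_eq_coe hZ hQ hP⟩

/-- A linear functional `α` on `k[T₁,…,Tₙ]` (for `n ≥ 1`) admits an ideal of finite
codimension inside its kernel iff its generating power series `Z_α` equals
`P / (Q₁(T₁)⋯Qₙ(Tₙ))` for some polynomial `P` and one-variable polynomials `Qᵢ` with
`Qᵢ(0) ≠ 0`. -/
theorem recognizable_iff_rational_multivariable (k : Type*) [Field k] (n : ℕ) (hn : 1 ≤ n)
    (α : MvPolynomial (Fin n) k →ₗ[k] k)
    (Z : MvPowerSeries (Fin n) k)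
    (hZ : ∀ d : Fin n →₀ ℕ, MvPowerSeries.coeff d Z = α (monomial d 1)) :
    (∃ I : Ideal (MvPolynomial (Fin n) k),
        (∀ x ∈ I, α x = 0) ∧ FiniteDimensional k (MvPolynomial (Fin n) k ⧸ I)) ↔
      ∃ (P : MvPolynomial (Fin n) k) (Q : Fin n → Polynomial k),
        (∀ i, (Q i).eval 0 ≠ 0) ∧
        Z * ∏ i : Fin n,
            ((Polynomial.aeval (X i : MvPolynomial (Fin n) k) (Q i) :
                MvPolynomial (Fin n) k) : MvPowerSeries (Fin n) k)
          = (P : MvPowerSeries (Fin n) k) :=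
  recognizable_iff_rational_multivariable_general k n α Z hZ
end
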